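/- If the free group F_k of rank k is a quotient of a one-relator group ⟨a_1,...,a_k | r⟩ on k generators (i.e., there is a surjection ⟨a_1,...,a_k | r⟩ → F_k), then the relator r is trivial in the free group on a_1,...,a_k, i.e., r reduces to the empty word. -/

import Mathlib

/-!
A surjective endomorphism `g` of a finitely generated residually finite group `G` is injective
(Mal'cev):
for every finite quotient `Q`, precomposition with `g` is an injective self-map of the finite set
`G →* Q`, hence bijective, so the quotient map factors through `g` and kills `ker g`.

Free groups are residually finite. For a reduced word `L`, the relation "`v = a u`" between
suffixes `u`, `v` of `L` is a partial bijection for each generator `a` (an ambiguity would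
produce a cancelling pair `a a⁻¹` inside `L`); extending these to permutations of the finite set
of suffixes gives an action in which the element spelt by `L` carries `[]` to `L`.

The map `f ∘ PresentedGroup.mk` is a surjective endomorphism of `F_k` killing `r`, so `r = 1`.
-/

theorem Equiv.Perm.exists_extending_rel {α : Type*} [Finite α] (R : α → α → Prop)
    (hR : ∀ x x' y y', R x y → R x' y' → (x = x' ↔ y = y')) :
    ∃ σ : Perm α, ∀ x y, R x y → σ x = y := by
  have hinj : ∀ p q : {p : α × α // R p.1 p.2}, p.1.1 = q.1.1 ∨ p.1.2 = q.1.2 → p = q := by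
    rintro ⟨⟨x, y⟩, h⟩ ⟨⟨x', y'⟩, h'⟩ he
    have := hR x x' y y' h h'
    ext <;> simp_all
  obtain ⟨σ, hσ⟩ := exists_extending_pair (fun p : {p : α × α // R p.1 p.2} => p.1.1)
    (fun p => p.1.2) (fun p q h => hinj p q (.inl h)) (fun p q h => hinj p q (.inr h))
  exact ⟨σ, fun x y h => hσ ⟨(x, y), h⟩⟩

instance Group.FG.finite_monoidHom {G Q : Type*} [Group G] [Group Q] [Group.FG G] [Finite Q] :
    Finite (G →* Q) := by
  obtain ⟨S, hS, hSfin⟩ := Group.fg_iff.1 ‹_›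
  have := hSfin.to_subtype
  exact Finite.of_injective (fun φ : G →* Q => fun s : S => φ s)
    fun φ ψ h => MonoidHom.eq_of_eqOn_dense hS fun s hs => congrFun h ⟨s, hs⟩

theorem Group.ResiduallyFinite.injective_of_surjective {G : Type*} [Group G] [Group.FG G]
    [Group.ResiduallyFinite G] {g : G →* G} (hg : Function.Surjective g) :
    Function.Injective g := by
  refine (injective_iff_map_eq_one g).2 fun x hx => ?_
  refine Group.eq_one_iff_forall_finiteIndexNormalSubroup x fun H => ?_
  have hcomp : Function.Surjective fun χ : G →* G ⧸ H.toSubgroup => χ.comp g :=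
    Finite.surjective_of_injective fun χ₁ χ₂ h => (MonoidHom.cancel_right hg).1 h
  obtain ⟨χ, hχ⟩ := hcomp (QuotientGroup.mk' H.toSubgroup)
  rw [← FiniteIndexNormalSubgroup.mem_toSubgroup_iff, ← QuotientGroup.eq_one_iff,
    ← QuotientGroup.mk'_apply, ← hχ, MonoidHom.comp_apply, hx, map_one]

namespace FreeGroup

variable {α : Type*}

theorem IsReduced.not_cons_cons_suffix {L u : List (α × Bool)} (hL : IsReduced L) (a : α)
    (b : Bool) : ¬ (a, b) :: (a, !b) :: u <:+ L := fun h => by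
  have := isReduced_cons_cons.1 (hL.infix h.isInfix)
  simp at this

instance (L : List (α × Bool)) : Finite {u // u <:+ L} :=
  ((List.finite_toSet L.tails).subset fun _ hu => (List.mem_tails _ _).2 hu).to_subtype

def SuffixStep (L : List (α × Bool)) (a : α) (u v : {u // u <:+ L}) : Prop :=
  v.1 = (a, true) :: u.1 ∨ u.1 = (a, false) :: v.1

theorem SuffixStep.eq_iff_eq {L : List (α × Bool)} (hL : IsReduced L) (a : α) {u u' v v'}
    (h : SuffixStep L a u v) (h' : SuffixStep L a u' v') : u = u' ↔ v = v' := by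
  obtain ⟨u, hu⟩ := u
  obtain ⟨u', hu'⟩ := u'
  obtain ⟨v, hv⟩ := v
  obtain ⟨v', hv'⟩ := v'
  simp only [SuffixStep, Subtype.mk.injEq] at h h' ⊢
  rcases h with rfl | rfl <;> rcases h' with rfl | rfl
  · simp
  · refine iff_of_false (fun h => ?_) (fun h => ?_) <;> subst h
    · exact hL.not_cons_cons_suffix a true hv
    · exact hL.not_cons_cons_suffix a false hu'
  · refine iff_of_false (fun h => ?_) (fun h => ?_) <;> subst h
    · exact hL.not_cons_cons_suffix a true hv'
    · exact hL.not_cons_cons_suffix a false hu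
  · simp

theorem lift_mk_apply_nil_of_suffixStep {L : List (α × Bool)}
    {σ : α → Equiv.Perm {u // u <:+ L}} (hσ : ∀ a u v, SuffixStep L a u v → σ a u = v)
    {u : List (α × Bool)} (hu : u <:+ L) :
    lift σ (mk u) ⟨[], List.nil_suffix⟩ = ⟨u, hu⟩ := by
  induction u with
  | nil => simp
  | cons x u ih =>
    have hu' := (List.suffix_cons x u).trans hu
    rw [lift_mk, List.map_cons, List.prod_cons, Equiv.Perm.mul_apply, ← lift_mk, ih hu']
    obtain ⟨a, _ | _⟩ := x
    · exact Equiv.Perm.inv_eq_iff_eq.2 (hσ a ⟨_, hu⟩ ⟨u, hu'⟩ (.inr rfl)).symm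
    · exact hσ a ⟨u, hu'⟩ ⟨_, hu⟩ (.inl rfl)

instance : Group.ResiduallyFinite (FreeGroup α) := by
  classical
  refine Group.residuallyFinite_of_forall_exists_finite_monoidHom fun w hw => ?_
  set L := w.toWord
  choose σ hσ using fun a => Equiv.Perm.exists_extending_rel (SuffixStep L a)
    fun _ _ _ _ => SuffixStep.eq_iff_eq isReduced_toWord a
  refine ⟨Equiv.Perm {u // u <:+ L}, inferInstance, inferInstance, lift σ, fun h => hw ?_⟩
  have hL := lift_mk_apply_nil_of_suffixStep hσ (List.suffix_refl L)
  rw [mk_toWord, h] at hL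
  exact toWord_eq_nil_iff.1 (congrArg Subtype.val hL).symm

end FreeGroup

/-- If the one-relator group `⟨a₁,…,a_k ∣ r⟩` surjects onto the free group of
rank `k`, then the relator `r` is trivial in the free group. -/
theorem relator_trivial_of_surjective_oneRelator (k : ℕ)
    (r : FreeGroup (Fin k))
    (f : PresentedGroup ({r} : Set (FreeGroup (Fin k))) →* FreeGroup (Fin k))
    (hf : Function.Surjective f) :
    r = 1 := by
  have hg : Function.Injective (f.comp (PresentedGroup.mk {r})) :=
    Group.ResiduallyFinite.injective_of_surjective (hf.comp (PresentedGroup.mk_surjective _))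
  refine (injective_iff_map_eq_one _).1 hg r ?_
  rw [MonoidHom.comp_apply, PresentedGroup.one_of_mem (Set.mem_singleton r), map_one]
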